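/- If E ⊂ ℝ^d tiles ℝ^d by translations along a full-rank lattice L and E is spectral with spectrum the dual lattice L* (Fuglede's lattice theorem), then the Gabor system {|E|^{−1/2}χ_E(x−a)e^{−2πi x·b}}_{(a,b)∈L×L*} is an orthonormal basis for L²(ℝ^d). -/

import Mathlib

open MeasureTheory Real
open scoped RealInnerProductSpace

/-- The normalized Gabor window function of a set `E`:
`x ↦ |E|^{-1/2} χ_E(x - a) e^{-2πi x·b}` for `p = (a,b)`. -/
noncomputable def gaborFun {d : ℕ} (E : Set (EuclideanSpace ℝ (Fin d)))
    (p : EuclideanSpace ℝ (Fin d) × EuclideanSpace ℝ (Fin d))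
    (x : EuclideanSpace ℝ (Fin d)) : ℂ :=
  E.indicator (fun _ => (((volume E).toReal ^ (-(1:ℝ)/2) : ℝ) : ℂ)) (x - p.1) *
    Complex.exp (-2 * π * Complex.I * ((⟪x, p.2⟫ : ℝ) : ℂ))

/-!
Write `c = |E|^{-1/2}` and `g_{a,b}(x) = c χ_E(x - a) e^{-2πi x·b}`. Since the translates `E + a`,
`a ∈ L`, are a.e. disjoint, `g_{a,b}` and `g_{a',b'}` have a.e. disjoint supports when `a ≠ a'`,
while for `a = a'` their inner product is, after translating by `a`, a unimodular multiple of
`c² ∫_E e^{-2πi x·(b - b')}`, which vanishes by the orthogonality of the exponentials on `E`.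
For completeness, `⟨f, g_{a,b}⟩ = 0` for all `b ∈ L*` says that `f(· + a)` is orthogonal to all
exponentials `e^{2πi x·b}` on `E`, hence vanishes a.e. on `E`; so `f` vanishes a.e. on every
translate `E + a`, and these cover `ℝ^d` up to a null set.
-/

open scoped FourierTransform ComplexConjugate

theorem eq_of_tsum_indicator_one_eq_one {ι α : Type*} {E : Set α} {f : ι → α}
    (h : ∑' i, E.indicator (fun _ => (1 : ℝ)) (f i) = 1) {i j : ι} (hi : f i ∈ E)
    (hj : f j ∈ E) : i = j := by
  classical
  by_contra hne
  have hs : Summable fun k => E.indicator (fun _ => (1 : ℝ)) (f k) := by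
    by_contra hs
    rw [tsum_eq_zero_of_not_summable hs] at h
    exact zero_ne_one h
  have hle := hs.sum_le_tsum {i, j} fun k _ => Set.indicator_nonneg (fun _ _ => zero_le_one) _
  rw [h, Finset.sum_pair hne, Set.indicator_of_mem hi, Set.indicator_of_mem hj] at hle
  norm_num at hle

theorem exists_mem_of_tsum_indicator_one_eq_one {ι α : Type*} {E : Set α} {f : ι → α}
    (h : ∑' i, E.indicator (fun _ => (1 : ℝ)) (f i) = 1) : ∃ i, f i ∈ E := by
  by_contra! hf
  simp only [Set.indicator_of_notMem (hf _), tsum_zero] at h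
  exact zero_ne_one h

theorem ae_eq_zero_of_forall_ae_sub_mem {G M : Type*} [Sub G] [MeasurableSpace G] [Zero M]
    {μ : Measure G} {S E : Set G} (hS : S.Countable)
    (htile : ∀ᵐ x ∂μ, ∑' a : S, E.indicator (fun _ => (1 : ℝ)) (x - a) = 1) {g : G → M}
    (hg : ∀ a ∈ S, ∀ᵐ x ∂μ, x - a ∈ E → g x = 0) : g =ᵐ[μ] 0 := by
  filter_upwards [(ae_ball_iff hS).mpr hg, htile] with x hgx hx
  obtain ⟨⟨a, ha⟩, hxa⟩ := exists_mem_of_tsum_indicator_one_eq_one hx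
  exact hgx a ha hxa

section Translate

variable {G : Type*} [AddGroup G] [MeasurableSpace G] [MeasurableAdd G] {μ : Measure G}
  [μ.IsAddRightInvariant] {E : Set G}

theorem integral_indicator_comp_sub_right {F : Type*} [NormedAddCommGroup F] [NormedSpace ℝ F]
    (hE : MeasurableSet E) (g : G → F) (a : G) :
    ∫ x, E.indicator g (x - a) ∂μ = ∫ y in E, g y ∂μ := by
  rw [integral_sub_right_eq_self (E.indicator g) a, integral_indicator hE]

theorem ae_sub_mem_imp_of_ae_restrict {M : Type*} [Zero M] (hE : MeasurableSet E) {g : G → M}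
    {a : G} (h : (fun y => g (y + a)) =ᵐ[μ.restrict E] 0) : ∀ᵐ x ∂μ, x - a ∈ E → g x = 0 := by
  have h' := (measurePreserving_sub_right μ a).quasiMeasurePreserving.ae
    ((ae_restrict_iff' hE).mp h)
  filter_upwards [h'] with x hx hxa
  simpa using hx hxa

end Translate

theorem exp_neg_two_pi_I_mul_eq_fourierChar (t : ℝ) :
    Complex.exp (-2 * π * Complex.I * t) = 𝐞 (-t) := by
  rw [Real.fourierChar_apply]
  push_cast
  ring_nf

theorem exp_two_pi_I_mul_eq_fourierChar (t : ℝ) :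
    Complex.exp (2 * π * Complex.I * t) = 𝐞 t := by
  rw [Real.fourierChar_apply]
  push_cast
  ring_nf

theorem conj_fourierChar (t : ℝ) : conj (𝐞 t : ℂ) = 𝐞 (-t) := by
  rw [AddChar.map_neg_eq_inv, Circle.coe_inv_eq_conj]

section Gabor

noncomputable def gaborConst {α : Type*} [MeasureSpace α] (E : Set α) : ℝ :=
  (volume E).toReal ^ (-(1 : ℝ) / 2)

theorem gaborConst_sq {α : Type*} [MeasureSpace α] (E : Set α) :
    gaborConst E ^ 2 = (volume E).toReal⁻¹ := by
  rw [gaborConst, ← Real.rpow_natCast, ← Real.rpow_mul ENNReal.toReal_nonneg]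
  norm_num [Real.rpow_neg_one]

theorem gaborConst_pos {α : Type*} [MeasureSpace α] {E : Set α} (h0 : 0 < volume E)
    (hfin : volume E ≠ ⊤) : 0 < gaborConst E :=
  Real.rpow_pos_of_pos (ENNReal.toReal_pos h0.ne' hfin) _

variable {d : ℕ} {E : Set (EuclideanSpace ℝ (Fin d))}

theorem gaborFun_apply (p : EuclideanSpace ℝ (Fin d) × EuclideanSpace ℝ (Fin d))
    (x : EuclideanSpace ℝ (Fin d)) :
    gaborFun E p x = E.indicator (fun _ => (gaborConst E : ℂ)) (x - p.1) * 𝐞 (-⟪x, p.2⟫) := by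
  rw [gaborFun, exp_neg_two_pi_I_mul_eq_fourierChar, gaborConst]

theorem gaborFun_eq_zero {p : EuclideanSpace ℝ (Fin d) × EuclideanSpace ℝ (Fin d)}
    {x : EuclideanSpace ℝ (Fin d)} (hx : x - p.1 ∉ E) : gaborFun E p x = 0 := by
  rw [gaborFun_apply, Set.indicator_of_notMem hx, zero_mul]

theorem mul_conj_gaborFun (f : EuclideanSpace ℝ (Fin d) → ℂ) (a b x : EuclideanSpace ℝ (Fin d)) :
    f x * conj (gaborFun E (a, b) x) =
      E.indicator (fun y => (gaborConst E : ℂ) * (f (y + a) * 𝐞 ⟪y + a, b⟫)) (x - a) := by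
  by_cases hx : x - a ∈ E
  · rw [gaborFun_apply, Set.indicator_of_mem hx, Set.indicator_of_mem hx, sub_add_cancel,
      map_mul, Complex.conj_ofReal, conj_fourierChar, neg_neg]
    ring
  · rw [gaborFun_eq_zero hx, Set.indicator_of_notMem hx, map_zero, mul_zero]

theorem integral_mul_conj_gaborFun (hE : MeasurableSet E) (f : EuclideanSpace ℝ (Fin d) → ℂ)
    (a b : EuclideanSpace ℝ (Fin d)) :
    ∫ x, f x * conj (gaborFun E (a, b) x) =
      gaborConst E * ∫ y in E, f (y + a) * 𝐞 ⟪y + a, b⟫ := by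
  simp_rw [mul_conj_gaborFun, integral_indicator_comp_sub_right hE, integral_const_mul]

theorem integral_norm_sq_gaborFun (hE : MeasurableSet E) (h0 : 0 < volume E)
    (hfin : volume E ≠ ⊤) (p : EuclideanSpace ℝ (Fin d) × EuclideanSpace ℝ (Fin d)) :
    ∫ x, ‖gaborFun E p x‖ ^ 2 = 1 := by
  have hnorm : ∀ x, ‖gaborFun E p x‖ ^ 2 = E.indicator (fun _ => gaborConst E ^ 2) (x - p.1) := by
    intro x
    by_cases hx : x - p.1 ∈ E
    · rw [gaborFun_apply, Set.indicator_of_mem hx, Set.indicator_of_mem hx, norm_mul,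
        Circle.norm_coe, mul_one, Complex.norm_real,
        Real.norm_of_nonneg (gaborConst_pos h0 hfin).le]
    · rw [gaborFun_eq_zero hx, Set.indicator_of_notMem hx, norm_zero, sq, mul_zero]
  simp_rw [hnorm, integral_indicator_comp_sub_right hE, setIntegral_const, smul_eq_mul,
    gaborConst_sq, measureReal_def]
  exact mul_inv_cancel₀ (ENNReal.toReal_pos h0.ne' hfin).ne'

theorem integral_gaborFun_mul_conj_of_fst_eq (hE : MeasurableSet E)
    (a b b' : EuclideanSpace ℝ (Fin d)) :
    ∫ x, gaborFun E (a, b) x * conj (gaborFun E (a, b') x) =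
      gaborConst E ^ 2 * 𝐞 (-⟪a, b - b'⟫) * ∫ y in E, (𝐞 (-⟪y, b - b'⟫) : ℂ) := by
  have hchar : ∀ y ∈ E, gaborFun E (a, b) (y + a) * 𝐞 ⟪y + a, b'⟫ =
      gaborConst E * (𝐞 (-⟪a, b - b'⟫) * 𝐞 (-⟪y, b - b'⟫)) := by
    intro y hy
    rw [gaborFun_apply, add_sub_cancel_right, Set.indicator_of_mem hy, mul_assoc, ← Circle.coe_mul,
      ← Circle.coe_mul, ← AddChar.map_add_eq_mul, ← AddChar.map_add_eq_mul]
    congr 3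
    simp only [inner_add_left, inner_sub_right]
    ring
  rw [integral_mul_conj_gaborFun hE, setIntegral_congr_fun hE hchar, integral_const_mul,
    integral_const_mul]
  ring

theorem gaborFun_orthogonal (hE : MeasurableSet E) {L B : Set (EuclideanSpace ℝ (Fin d))}
    (htile : ∀ᵐ x ∂volume, ∑' a : L, E.indicator (fun _ => (1 : ℝ)) (x - a) = 1)
    (horthE : ∀ b ∈ B, ∀ b' ∈ B, b ≠ b' →
      ∫ x in E, Complex.exp (-2 * π * Complex.I * ((⟪x, b - b'⟫ : ℝ) : ℂ)) = 0) :
    ∀ p ∈ L ×ˢ B, ∀ q ∈ L ×ˢ B, p ≠ q → ∫ x, gaborFun E p x * conj (gaborFun E q x) = 0 := by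
  rintro ⟨a, b⟩ ⟨ha, hb⟩ ⟨a', b'⟩ ⟨ha', hb'⟩ hne
  obtain rfl | haa' := eq_or_ne a a'
  · have hbb' : b ≠ b' := fun h => hne (h ▸ rfl)
    simp_rw [integral_gaborFun_mul_conj_of_fst_eq hE, ← exp_neg_two_pi_I_mul_eq_fourierChar,
      horthE b hb b' hb' hbb', mul_zero]
  · refine integral_eq_zero_of_ae ?_
    filter_upwards [htile] with x hx
    by_cases hxa : x - a ∈ E
    · have hxa' : x - a' ∉ E := fun hxa' => haa' <| congrArg Subtype.val <|
        eq_of_tsum_indicator_one_eq_one (i := ⟨a, ha⟩) (j := ⟨a', ha'⟩) hx hxa hxa'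
      rw [Pi.zero_apply, gaborFun_eq_zero (p := (a', b')) hxa', map_zero, mul_zero]
    · rw [Pi.zero_apply, gaborFun_eq_zero hxa, zero_mul]

theorem gaborFun_complete (hE : MeasurableSet E) (h0 : 0 < volume E) (hfin : volume E ≠ ⊤)
    {L B : Set (EuclideanSpace ℝ (Fin d))} (hL : L.Countable)
    (htile : ∀ᵐ x ∂volume, ∑' a : L, E.indicator (fun _ => (1 : ℝ)) (x - a) = 1)
    (hcompE : ∀ f : EuclideanSpace ℝ (Fin d) → ℂ, MemLp f 2 (volume.restrict E) →
      (∀ b ∈ B, ∫ x in E, f x * Complex.exp (2 * π * Complex.I * ((⟪x, b⟫ : ℝ) : ℂ)) = 0) →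
      f =ᵐ[volume.restrict E] 0)
    (f : EuclideanSpace ℝ (Fin d) → ℂ) (hf : MemLp f 2 volume)
    (horth : ∀ p ∈ L ×ˢ B, ∫ x, f x * conj (gaborFun E p x) = 0) : f =ᵐ[volume] 0 := by
  refine ae_eq_zero_of_forall_ae_sub_mem hL htile fun a ha => ae_sub_mem_imp_of_ae_restrict hE ?_
  refine hcompE _ ((hf.comp_measurePreserving (measurePreserving_add_right volume a)).restrict E)
    fun b hb => ?_
  have hchar : ∀ y, f (y + a) * 𝐞 ⟪y + a, b⟫ =
      𝐞 ⟪a, b⟫ * (f (y + a) * Complex.exp (2 * π * Complex.I * ((⟪y, b⟫ : ℝ) : ℂ))) := by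
    intro y
    rw [exp_two_pi_I_mul_eq_fourierChar, inner_add_left, add_comm, AddChar.map_add_eq_mul,
      Circle.coe_mul]
    ring
  have h := horth (a, b) ⟨ha, hb⟩
  simp_rw [integral_mul_conj_gaborFun hE, hchar, integral_const_mul] at h
  simpa [(gaborConst_pos h0 hfin).ne'] using h

end Gabor

theorem lattice_tiling_spectral_gabor_onb_general {d : ℕ}
    (v : Module.Basis (Fin d) ℝ (EuclideanSpace ℝ (Fin d)))
    (L : Set (EuclideanSpace ℝ (Fin d)))
    (hL : L = {x | ∃ c : Fin d → ℤ, x = ∑ i, (c i : ℝ) • v i})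
    (Ldual : Set (EuclideanSpace ℝ (Fin d)))
    (E : Set (EuclideanSpace ℝ (Fin d))) (hEm : MeasurableSet E)
    (hEb : Bornology.IsBounded E) (hEpos : 0 < volume E)
    -- `E` tiles `ℝ^d` by `L`
    (htile : ∀ᵐ x : EuclideanSpace ℝ (Fin d) ∂volume,
      ∑' a : L, E.indicator (fun _ => (1 : ℝ)) (x - (a : EuclideanSpace ℝ (Fin d))) = 1)
    -- `E` is spectral with spectrum `L*`: orthonormality of the normalized exponentials …
    (horthE : ∀ b ∈ Ldual, ∀ b' ∈ Ldual, b ≠ b' →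
      ∫ x in E, Complex.exp (-2 * π * Complex.I * ((⟪x, b - b'⟫ : ℝ) : ℂ)) = 0)
    -- … and completeness in `L²(E)`
    (hcompE : ∀ f : EuclideanSpace ℝ (Fin d) → ℂ, MemLp f 2 (volume.restrict E) →
      (∀ b ∈ Ldual, ∫ x in E, f x * Complex.exp (2 * π * Complex.I * ((⟪x, b⟫ : ℝ) : ℂ)) = 0) →
      f =ᵐ[volume.restrict E] 0) :
    -- orthogonality of the Gabor system
    (∀ p ∈ L ×ˢ Ldual, ∀ q ∈ L ×ˢ Ldual, p ≠ q →
      ∫ x, gaborFun E p x * (starRingEnd ℂ) (gaborFun E q x) = 0) ∧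
    -- each element has norm one
    (∀ p ∈ L ×ˢ Ldual, ∫ x, ‖gaborFun E p x‖ ^ 2 = 1) ∧
    -- completeness in `L²(ℝ^d)`
    (∀ f : EuclideanSpace ℝ (Fin d) → ℂ, MemLp f 2 volume →
      (∀ p ∈ L ×ˢ Ldual, ∫ x, f x * (starRingEnd ℂ) (gaborFun E p x) = 0) →
      f =ᵐ[volume] 0) := by
  have hfin : volume E ≠ ⊤ := hEb.measure_lt_top.ne
  have hLc : L.Countable := hL ▸
    (Set.countable_range fun c : Fin d → ℤ => ∑ i, (c i : ℝ) • v i).mono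
      (by rintro _ ⟨c, rfl⟩; exact ⟨c, rfl⟩)
  exact ⟨gaborFun_orthogonal hEm htile horthE,
    fun p _ => integral_norm_sq_gaborFun hEm hEpos hfin p,
    gaborFun_complete hEm hEpos hfin hLc htile hcompE⟩

/-- Fuglede's lattice situation: if `E` tiles `ℝ^d` by a full-rank lattice `L` and is
spectral with spectrum the dual lattice `L*` (the normalized exponentials indexed by `L*`
form an orthonormal basis of `L²(E)`), then the Gabor system
`{|E|^{-1/2} χ_E(x-a) e^{-2πi x·b}}_{(a,b) ∈ L × L*}` is an orthonormal basis of `L²(ℝ^d)`. -/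
theorem lattice_tiling_spectral_gabor_onb {d : ℕ} (hd : 1 ≤ d)
    (v : Module.Basis (Fin d) ℝ (EuclideanSpace ℝ (Fin d)))
    (L : Set (EuclideanSpace ℝ (Fin d)))
    (hL : L = {x | ∃ c : Fin d → ℤ, x = ∑ i, (c i : ℝ) • v i})
    (Ldual : Set (EuclideanSpace ℝ (Fin d)))
    (hLdual : Ldual = {ξ | ∀ a ∈ L, ∃ n : ℤ, (⟪ξ, a⟫ : ℝ) = n})
    (E : Set (EuclideanSpace ℝ (Fin d))) (hEm : MeasurableSet E)
    (hEb : Bornology.IsBounded E) (hEpos : 0 < volume E)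
    -- `E` tiles `ℝ^d` by `L`
    (htile : ∀ᵐ x : EuclideanSpace ℝ (Fin d) ∂volume,
      ∑' a : L, E.indicator (fun _ => (1 : ℝ)) (x - (a : EuclideanSpace ℝ (Fin d))) = 1)
    -- `E` is spectral with spectrum `L*`: orthonormality of the normalized exponentials …
    (horthE : ∀ b ∈ Ldual, ∀ b' ∈ Ldual, b ≠ b' →
      ∫ x in E, Complex.exp (-2 * π * Complex.I * ((⟪x, b - b'⟫ : ℝ) : ℂ)) = 0)
    -- … and completeness in `L²(E)`
    (hcompE : ∀ f : EuclideanSpace ℝ (Fin d) → ℂ, MemLp f 2 (volume.restrict E) →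
      (∀ b ∈ Ldual, ∫ x in E, f x * Complex.exp (2 * π * Complex.I * ((⟪x, b⟫ : ℝ) : ℂ)) = 0) →
      f =ᵐ[volume.restrict E] 0) :
    -- orthogonality of the Gabor system
    (∀ p ∈ L ×ˢ Ldual, ∀ q ∈ L ×ˢ Ldual, p ≠ q →
      ∫ x, gaborFun E p x * (starRingEnd ℂ) (gaborFun E q x) = 0) ∧
    -- each element has norm one
    (∀ p ∈ L ×ˢ Ldual, ∫ x, ‖gaborFun E p x‖ ^ 2 = 1) ∧
    -- completeness in `L²(ℝ^d)`
    (∀ f : EuclideanSpace ℝ (Fin d) → ℂ, MemLp f 2 volume →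
      (∀ p ∈ L ×ˢ Ldual, ∫ x, f x * (starRingEnd ℂ) (gaborFun E p x) = 0) →
      f =ᵐ[volume] 0) :=
  lattice_tiling_spectral_gabor_onb_general v L hL Ldual E hEm hEb hEpos htile horthE hcompE
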